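/- arXiv:2305.17443 — 3 statements merged into one kernel-verified Lean document; each statement's English description precedes it below -/
import Mathlib

section
/- Let M ≥ 1 and let G be a connected simple graph on Fin M (an undirected connected communication graph). Let μ > 0 be a consensus gain, let x₀ : Fin M → ℝ be initial conditions, and let x : ℝ → Fin M → ℝ satisfy x(0) = x₀ and, for every i and every t, the consensus dynamics d/dt x_i(t) = μ · Σ_{j ∈ N(i)} (x_j(t) − x_i(t)), where N(i) is the neighborhood of i in G. Then there exist constants c > 0 and λ > 0 such that for all t ≥ 0 and all i, |x_i(t) − (1/M)·Σ_{j} x₀(j)| ≤ c·exp(−λ·t); in particular each x_i(t) converges exponentially to the average of the initial conditions as t → ∞. (Proposition 2 of the paper, average consensus.) -/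
/-!
Let `a` be the average of the initial values. The flow conserves `∑ i, x t i`, so the deviation
`g t = x t - a` has mean zero for all time, and `V t = ∑ i, (g t i)²` satisfies
`V' = -μ E(g t)` with `E` the Dirichlet energy `∑ i, ∑ j ∈ N(i), (g j - g i)²`. On a connected
graph a mean-zero `g` obeys the Poincaré inequality `2 V ≤ M³ E(g)`: each difference `g p - g q`
telescopes along a path of length `< M`. Hence `V' ≤ -(2μ / M³) V`, Grönwall gives exponential
decay of `V`, and `|g i| ≤ √V` decays at half the rate.
-/

lemma sum_sum_sub_sq {ι : Type*} [Fintype ι] (f : ι → ℝ) :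
    ∑ p, ∑ q, (f p - f q) ^ 2 = 2 * Fintype.card ι * ∑ i, f i ^ 2 - 2 * (∑ i, f i) ^ 2 := by
  simp only [sub_sq, Finset.sum_add_distrib, Finset.sum_sub_distrib, Finset.sum_const,
    Finset.card_univ, nsmul_eq_mul, ← Finset.mul_sum, ← Finset.sum_mul]
  ring

lemma le_mul_exp_of_hasDerivAt_le {f f' : ℝ → ℝ} {k : ℝ} (hf : ∀ t, HasDerivAt f (f' t) t)
    (hle : ∀ t, f' t ≤ -k * f t) {t : ℝ} (ht : 0 ≤ t) : f t ≤ f 0 * Real.exp (-k * t) := by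
  have := le_gronwallBound_of_liminf_deriv_right_le (δ := f 0) (K := -k) (ε := 0)
    (fun s _ => (hf s).continuousAt.continuousWithinAt)
    (fun s _ _ hr => (hf s).hasDerivWithinAt.liminf_right_slope_le hr) le_rfl
    (fun s _ => (add_zero (-k * f s)).symm ▸ hle s) t ⟨ht, le_rfl⟩
  rwa [gronwallBound_ε0, sub_zero] at this

lemma abs_le_sqrt_mul_exp_of_sum_sq_le {ι : Type*} [Fintype ι] {g : ι → ℝ} {C k t : ℝ}
    (h : ∑ i, g i ^ 2 ≤ C * Real.exp (-k * t)) (i : ι) :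
    |g i| ≤ √C * Real.exp (-(k / 2) * t) := by
  calc |g i| ≤ √(∑ j, g j ^ 2) :=
        Real.abs_le_sqrt (Finset.single_le_sum (fun j _ => sq_nonneg (g j)) (Finset.mem_univ i))
    _ ≤ √(C * Real.exp (-k * t)) := Real.sqrt_le_sqrt h
    _ = √C * Real.exp (-(k / 2) * t) := by
      rw [Real.sqrt_mul' _ (Real.exp_pos _).le, ← Real.exp_half]
      ring_nf

namespace SimpleGraph

lemma Walk.abs_sub_le_length_mul {V : Type*} {G : SimpleGraph V} {f : V → ℝ} {B : ℝ}
    (hB : ∀ u v, G.Adj u v → |f u - f v| ≤ B) {p q : V} (w : G.Walk p q) :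
    |f p - f q| ≤ w.length * B := by
  induction w with
  | nil => simp
  | @cons u v r huv w ih =>
    calc |f u - f r| ≤ |f u - f v| + |f v - f r| := abs_sub_le _ _ _
      _ ≤ B + w.length * B := add_le_add (hB u v huv) ih
      _ = (Walk.cons huv w).length * B := by rw [Walk.length_cons]; push_cast; ring

variable {V : Type*} [Fintype V] (G : SimpleGraph V) [DecidableRel G.Adj]

noncomputable def dirichletEnergy (f : V → ℝ) : ℝ :=
  ∑ i, ∑ j ∈ G.neighborFinset i, (f j - f i) ^ 2

lemma dirichletEnergy_nonneg (f : V → ℝ) : 0 ≤ G.dirichletEnergy f := by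
  unfold dirichletEnergy
  positivity

lemma sum_sum_neighborFinset_comm {R : Type*} [AddCommMonoid R] (h : V → V → R) :
    ∑ i, ∑ j ∈ G.neighborFinset i, h i j = ∑ i, ∑ j ∈ G.neighborFinset i, h j i :=
  Finset.sum_comm' fun i j => by simp [G.adj_comm]

lemma sum_sum_neighborFinset_sub_eq_zero (f : V → ℝ) :
    ∑ i, ∑ j ∈ G.neighborFinset i, (f j - f i) = 0 := by
  have hswap := G.sum_sum_neighborFinset_comm fun i j => f j - f i
  have hneg : ∑ i, ∑ j ∈ G.neighborFinset i, (f i - f j)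
      = -∑ i, ∑ j ∈ G.neighborFinset i, (f j - f i) := by
    simp only [← Finset.sum_neg_distrib, neg_sub]
  linarith

lemma sum_mul_sum_neighborFinset_sub (f : V → ℝ) :
    ∑ i, f i * ∑ j ∈ G.neighborFinset i, (f j - f i) = -(G.dirichletEnergy f / 2) := by
  have hswap := G.sum_sum_neighborFinset_comm fun i j => f i * (f j - f i)
  have hsym : ∑ i, ∑ j ∈ G.neighborFinset i, f i * (f j - f i)
      + ∑ i, ∑ j ∈ G.neighborFinset i, f j * (f i - f j) = -G.dirichletEnergy f := by
    simp only [dirichletEnergy, ← Finset.sum_add_distrib, ← Finset.sum_neg_distrib]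
    exact Finset.sum_congr rfl fun i _ => Finset.sum_congr rfl fun j _ => by ring
  simp only [Finset.mul_sum]
  linarith

lemma abs_sub_le_sqrt_dirichletEnergy (f : V → ℝ) {u v : V} (huv : G.Adj u v) :
    |f u - f v| ≤ √(G.dirichletEnergy f) := by
  refine Real.abs_le_sqrt ?_
  calc (f u - f v) ^ 2 = (f v - f u) ^ 2 := by ring
    _ ≤ ∑ j ∈ G.neighborFinset u, (f j - f u) ^ 2 :=
      Finset.single_le_sum (fun j _ => sq_nonneg (f j - f u)) ((G.mem_neighborFinset u v).2 huv)
    _ ≤ G.dirichletEnergy f :=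
      Finset.single_le_sum (f := fun i => ∑ j ∈ G.neighborFinset i, (f j - f i) ^ 2)
        (fun i _ => by positivity) (Finset.mem_univ u)

variable {G}

lemma Connected.sq_sub_le_card_sq_mul_dirichletEnergy (hG : G.Connected) (f : V → ℝ)
    (p q : V) :
    (f p - f q) ^ 2 ≤ (Fintype.card V : ℝ) ^ 2 * G.dirichletEnergy f := by
  obtain ⟨w, hw, -⟩ := hG.exists_path_of_dist p q
  have hlen : (w.length : ℝ) ≤ Fintype.card V := by exact_mod_cast hw.length_lt.le
  have hbound := w.abs_sub_le_length_mul fun _ _ => G.abs_sub_le_sqrt_dirichletEnergy f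
  calc (f p - f q) ^ 2 = |f p - f q| ^ 2 := (sq_abs _).symm
    _ ≤ (Fintype.card V * √(G.dirichletEnergy f)) ^ 2 := by
      gcongr
      exact hbound.trans (by gcongr)
    _ = (Fintype.card V : ℝ) ^ 2 * G.dirichletEnergy f := by
      rw [mul_pow, Real.sq_sqrt (G.dirichletEnergy_nonneg f)]

lemma Connected.two_mul_sum_sq_le (hG : G.Connected) {f : V → ℝ} (hf : ∑ i, f i = 0) :
    2 * ∑ i, f i ^ 2 ≤ (Fintype.card V : ℝ) ^ 3 * G.dirichletEnergy f := by
  have hn : (0 : ℝ) < Fintype.card V := by exact_mod_cast Fintype.card_pos_iff.2 hG.nonempty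
  have hpairs : 2 * Fintype.card V * ∑ i, f i ^ 2
      ≤ (Fintype.card V : ℝ) ^ 4 * G.dirichletEnergy f := by
    calc 2 * Fintype.card V * ∑ i, f i ^ 2 = ∑ p, ∑ q, (f p - f q) ^ 2 := by
          rw [sum_sum_sub_sq, hf]; ring
      _ ≤ ∑ _p : V, ∑ _q : V, (Fintype.card V : ℝ) ^ 2 * G.dirichletEnergy f :=
          Finset.sum_le_sum fun p _ => Finset.sum_le_sum fun q _ =>
            hG.sq_sub_le_card_sq_mul_dirichletEnergy f p q
      _ = (Fintype.card V : ℝ) ^ 4 * G.dirichletEnergy f := by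
          simp only [Finset.sum_const, Finset.card_univ, nsmul_eq_mul]; ring
  nlinarith

variable (G) in
def IsConsensusTrajectory (μ : ℝ) (x : ℝ → V → ℝ) : Prop :=
  ∀ i t, HasDerivAt (fun s => x s i) (μ * ∑ j ∈ G.neighborFinset i, (x t j - x t i)) t

variable {μ : ℝ} {x : ℝ → V → ℝ}

lemma IsConsensusTrajectory.sum_eq (hx : G.IsConsensusTrajectory μ x) (t : ℝ) :
    ∑ i, x t i = ∑ i, x 0 i := by
  have hderiv : ∀ s, HasDerivAt (fun s => ∑ i, x s i) 0 s := fun s => by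
    simpa only [← Finset.mul_sum, G.sum_sum_neighborFinset_sub_eq_zero, mul_zero] using
      HasDerivAt.fun_sum (u := Finset.univ) fun i _ => hx i s
  exact is_const_of_deriv_eq_zero (fun s => (hderiv s).differentiableAt)
    (fun s => (hderiv s).deriv) t 0

lemma IsConsensusTrajectory.hasDerivAt_sum_sq_sub (hx : G.IsConsensusTrajectory μ x)
    (a t : ℝ) : HasDerivAt (fun s => ∑ i, (x s i - a) ^ 2)
      (-(μ * G.dirichletEnergy fun i => x t i - a)) t := by
  have hshift := G.sum_mul_sum_neighborFinset_sub fun i => x t i - a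
  simp only [sub_sub_sub_cancel_right] at hshift
  refine (HasDerivAt.fun_sum fun i _ => ((hx i t).sub_const a).fun_pow 2).congr_deriv ?_
  calc _ = 2 * μ * ∑ i, (x t i - a) * ∑ j ∈ G.neighborFinset i, (x t j - x t i) := by
        rw [Finset.mul_sum]
        exact Finset.sum_congr rfl fun i _ => by push_cast; ring
    _ = _ := by rw [hshift]; ring

end SimpleGraph

theorem average_consensus_general
    (M : ℕ)
    (G : SimpleGraph (Fin M)) [DecidableRel G.Adj] (hG : G.Connected)
    (μ : ℝ) (hμ : 0 < μ)
    (x₀ : Fin M → ℝ)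
    (x : ℝ → Fin M → ℝ)
    (hx0 : x 0 = x₀)
    (hdyn : ∀ (i : Fin M) (t : ℝ),
      HasDerivAt (fun s => x s i)
        (μ * ∑ j ∈ G.neighborFinset i, (x t j - x t i)) t) :
    ∃ c > 0, ∃ lam > 0, ∀ t ≥ (0 : ℝ), ∀ i : Fin M,
      |x t i - (1 / (M : ℝ)) * ∑ j : Fin M, x₀ j| ≤ c * Real.exp (-lam * t) := by
  have hx : G.IsConsensusTrajectory μ x := hdyn
  have hM : (0 : ℝ) < M := by exact_mod_cast Fin.pos_iff_nonempty.2 hG.nonempty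
  set a := 1 / (M : ℝ) * ∑ j, x₀ j
  set k := 2 * μ / (M : ℝ) ^ 3
  have hmean : ∀ t, ∑ i, (x t i - a) = 0 := fun t => by
    rw [Finset.sum_sub_distrib, hx.sum_eq t, hx0]
    simp only [Finset.sum_const, Finset.card_univ, Fintype.card_fin, nsmul_eq_mul, a]
    field_simp
    ring
  have hgap : ∀ t, -(μ * G.dirichletEnergy fun i => x t i - a)
      ≤ -k * ∑ i, (x t i - a) ^ 2 := fun t => by
    have hpoincare := hG.two_mul_sum_sq_le (hmean t)
    rw [Fintype.card_fin] at hpoincare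
    have : k * ∑ i, (x t i - a) ^ 2 ≤ μ * G.dirichletEnergy fun i => x t i - a := by
      rw [div_mul_eq_mul_div, div_le_iff₀ (by positivity)]
      nlinarith
    linarith
  have hdecay := fun t (ht : 0 ≤ t) =>
    le_mul_exp_of_hasDerivAt_le (hx.hasDerivAt_sum_sq_sub a) hgap ht
  refine ⟨√(∑ i, (x₀ i - a) ^ 2) + 1, by positivity, k / 2, by positivity, fun t ht i => ?_⟩
  calc |x t i - a| ≤ √(∑ i, (x₀ i - a) ^ 2) * Real.exp (-(k / 2) * t) := by
        rw [← hx0]; exact abs_le_sqrt_mul_exp_of_sum_sq_le (hdecay t ht) i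
    _ ≤ _ := by gcongr; linarith

/-- Proposition 2 (average consensus): on a connected undirected communication graph,
Laplacian consensus dynamics converge exponentially to the average of the initial
conditions. -/
theorem average_consensus
    (M : ℕ) (hM : 1 ≤ M)
    (G : SimpleGraph (Fin M)) [DecidableRel G.Adj] (hG : G.Connected)
    (μ : ℝ) (hμ : 0 < μ)
    (x₀ : Fin M → ℝ)
    (x : ℝ → Fin M → ℝ)
    (hx0 : x 0 = x₀)
    (hdyn : ∀ (i : Fin M) (t : ℝ),
      HasDerivAt (fun s => x s i)
        (μ * ∑ j ∈ G.neighborFinset i, (x t j - x t i)) t) :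
    ∃ c > 0, ∃ lam > 0, ∀ t ≥ (0 : ℝ), ∀ i : Fin M,
      |x t i - (1 / (M : ℝ)) * ∑ j : Fin M, x₀ j| ≤ c * Real.exp (-lam * t) :=
  average_consensus_general M G hG μ hμ x₀ x hx0 hdyn
end

section
/- Let h > 0, τ_0 > 0, K_{p_0} > 0, K_{d_0} > 0 with K_{d_0} > τ_0 K_{p_0}. Then the 4×4 real matrix F = [[0, 1, −h, 0], [0, 0, −1, 0], [0, 0, −1/τ_0, 1/τ_0], [K_{p_0}/h, K_{d_0}/h, −K_{d_0}, −1/h]] is Hurwitz: every eigenvalue of F (as a complex matrix) has negative real part. (Intermediate claim in the proof of Theorem 1: the homogenized follower closed-loop state matrix is Hurwitz under the Routh–Hurwitz conditions h > 0, K_{p_0}, K_{d_0} > 0, K_{d_0} > τ_0 K_{p_0}.) -/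
/-!
Expanding along the first row, `h τ₀ det (μ - F) = (h μ + 1) (τ₀ μ³ + μ² + K_{d₀} μ + K_{p₀})`.
The linear factor gives the eigenvalue `-1/h`. For the cubic `a z³ + b z² + c z + d` with positive
coefficients and `a d < b c` (Routh–Hurwitz), suppose a root `x + i y` had `x ≥ 0`. A real root is
impossible since every term is then nonnegative and `d > 0`. Otherwise the imaginary part gives
`a y² = 3 a x² + 2 b x + c`, and eliminating `y²` from the real part leaves
`8 a² x³ + 8 a b x² + (2 a c + 2 b²) x + (b c - a d) = 0`, whose left side is positive.
-/

open Complex Matrix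

theorem Matrix.det_fin_four_of {R : Type*} [CommRing R]
    (a b c d e f g i j k l m n o p q : R) :
    !![a, b, c, d; e, f, g, i; j, k, l, m; n, o, p, q].det =
      a * (f * (l * q - m * p) - g * (k * q - m * o) + i * (k * p - l * o))
      - b * (e * (l * q - m * p) - g * (j * q - m * n) + i * (j * p - l * n))
      + c * (e * (k * q - m * o) - f * (j * q - m * n) + i * (j * o - k * n))
      - d * (e * (k * p - l * o) - f * (j * p - l * n) + g * (j * o - k * n)) := by
  rw [det_succ_row_zero]
  simp only [Fin.sum_univ_succ, det_fin_three]
  simp only [Nat.succ_eq_add_one, Nat.reduceAdd, Fin.isValue, Fin.coe_ofNat_eq_mod, Nat.zero_mod,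
    pow_zero, of_apply, cons_val', cons_val_zero, cons_val_fin_one, one_mul, Fin.succAbove_zero,
    submatrix_apply, Fin.succ_zero_eq_one, cons_val_one, Fin.succ_one_eq_two, cons_val,
    Fin.reduceSucc, Nat.one_mod, pow_one, neg_mul, Fin.succAbove, Fin.castSucc_zero, zero_lt_one,
    ↓reduceIte, Fin.castSucc_one, lt_self_iff_false, Fin.reduceCastSucc, Fin.lt_def, Nat.reduceMod,
    Nat.not_ofNat_lt_one, even_two, Even.neg_pow, one_pow, Order.lt_two_iff, zero_le, Std.le_refl,
    Nat.mod_succ, Nat.ofNat_pos, Nat.one_lt_ofNat, Nat.lt_add_one, Finset.univ_eq_empty,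
    Fin.val_succ, Fin.val_eq_zero, zero_add, cons_val_succ, Finset.sum_const, Finset.card_empty,
    zero_nsmul, add_zero]
  ring

theorem Complex.re_neg_of_cubic_routh_hurwitz {a b c d : ℝ} (ha : 0 < a) (hb : 0 < b)
    (hc : 0 < c) (hd : 0 < d) (hRH : a * d < b * c) {z : ℂ}
    (hz : a * z ^ 3 + b * z ^ 2 + c * z + d = 0) : z.re < 0 := by
  set x := z.re
  set y := z.im
  have hre : a * (x ^ 3 - 3 * x * y ^ 2) + b * (x ^ 2 - y ^ 2) + c * x + d = 0 := by
    have := congrArg re hz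
    simp only [pow_succ, pow_zero, one_mul, add_re, mul_re, ofReal_re, mul_im, ofReal_im,
      zero_mul, sub_zero, zero_re] at this
    linear_combination this
  have him : y * (a * (3 * x ^ 2 - y ^ 2) + 2 * b * x + c) = 0 := by
    have := congrArg im hz
    simp only [pow_succ, pow_zero, one_mul, add_im, mul_im, ofReal_re, mul_re, ofReal_im,
      zero_mul, add_zero, zero_im] at this
    linear_combination this
  by_contra! hx
  rcases mul_eq_zero.mp him with hy | hE
  · rw [hy] at hre
    nlinarith [pow_nonneg hx 3, mul_nonneg hb.le (pow_nonneg hx 2), mul_nonneg hc.le hx]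
  · have : 8 * a ^ 2 * x ^ 3 + 8 * a * b * x ^ 2 + (2 * a * c + 2 * b ^ 2) * x
        + (b * c - a * d) = 0 := by
      linear_combination (-a) * hre + (3 * a * x + b) * hE
    have : 0 ≤ 8 * a ^ 2 * x ^ 3 + 8 * a * b * x ^ 2 + (2 * a * c + 2 * b ^ 2) * x := by
      positivity
    linarith

noncomputable def followerMatrix (h τ Kp Kd : ℝ) : Matrix (Fin 4) (Fin 4) ℝ :=
  !![0, 1, -h, 0;
     0, 0, -1, 0;
     0, 0, -1/τ, 1/τ;
     Kp/h, Kd/h, -Kd, -1/h]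

theorem followerMatrix_det_scalar_sub {h τ : ℝ} (hh : h ≠ 0) (hτ : τ ≠ 0) (Kp Kd : ℝ) (μ : ℂ) :
    h * τ * (scalar (Fin 4) μ - (followerMatrix h τ Kp Kd).map ofReal).det =
      (h * μ + 1) * (τ * μ ^ 3 + μ ^ 2 + Kd * μ + Kp) := by
  have hh' : (h : ℂ) ≠ 0 := ofReal_ne_zero.mpr hh
  have hτ' : (τ : ℂ) ≠ 0 := ofReal_ne_zero.mpr hτ
  have hM : scalar (Fin 4) μ - (followerMatrix h τ Kp Kd).map ofReal =
      !![μ, -1, (h : ℂ), 0;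
         0, μ, 1, 0;
         0, 0, μ + (τ : ℂ)⁻¹, -(τ : ℂ)⁻¹;
         -(Kp / h), -(Kd / h), (Kd : ℂ), μ + (h : ℂ)⁻¹] := by
    ext i j
    fin_cases i <;> fin_cases j <;> simp [followerMatrix, div_eq_mul_inv]
  rw [hM, det_fin_four_of]
  field_simp
  ring

/-- The homogenized follower closed-loop state matrix is Hurwitz under the
Routh–Hurwitz conditions h > 0, K_{p₀}, K_{d₀} > 0, K_{d₀} > τ₀ K_{p₀}
(intermediate claim in the proof of Theorem 1). -/
theorem follower_matrix_hurwitz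
    (h τ0 Kp0 Kd0 : ℝ) (hh : 0 < h) (hτ0 : 0 < τ0)
    (hKp0 : 0 < Kp0) (hKd0 : 0 < Kd0) (hRH : τ0 * Kp0 < Kd0) :
    ∀ μ ∈ spectrum ℂ
      ((!![0, 1, -h, 0;
           0, 0, -1, 0;
           0, 0, -1/τ0, 1/τ0;
           Kp0/h, Kd0/h, -Kd0, -1/h] : Matrix (Fin 4) (Fin 4) ℝ).map
        Complex.ofReal),
      μ.re < 0 := by
  intro μ hμ
  have hdet : (scalar (Fin 4) μ - (followerMatrix h τ0 Kp0 Kd0).map ofReal).det = 0 := by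
    rw [← eval_charpoly]
    exact mem_spectrum_iff_isRoot_charpoly.mp hμ
  have hroots : (h * μ + 1) * (τ0 * μ ^ 3 + μ ^ 2 + Kd0 * μ + Kp0) = 0 := by
    rw [← followerMatrix_det_scalar_sub hh.ne' hτ0.ne', hdet, mul_zero]
  rcases mul_eq_zero.mp hroots with hlin | hcubic
  · have : h * μ.re + 1 = 0 := by simpa using congrArg re hlin
    nlinarith
  · refine re_neg_of_cubic_routh_hurwitz hτ0 one_pos hKd0 hKp0 (by linarith) ?_
    push_cast
    linear_combination hcubic
end

section
/- Let M ≥ 1 and let G be a connected simple graph on Fin M. Define sgn₊ : ℝ → ℝ by sgn₊(y) = 1 if y > 0 and sgn₊(y) = 0 if y ≤ 0. Let x : ℝ → Fin M → ℝ be such that each x_i is continuous and satisfies, for all t ≥ 0, x_i(t) = x_i(0) + ∫₀ᵗ sgn₊( Σ_{j ∈ N(i)} (x_j(s) − x_i(s)) ) ds, where N(i) is the neighborhood of i in G. Then the states reach the maximum of the initial conditions in finite time: there exists T ≥ 0 such that for all t ≥ T and all i, x_i(t) = max_j x_j(0). (Proposition 3 of the paper, applied to the estimates ā_{min,i} of the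 maximum of the minimum accelerations: max-consensus in finite time.) -/
/-!
Each state is nondecreasing and 1-Lipschitz, and an agent holding the current maximum has no
neighbour above it, so its velocity vanishes. At almost every time the running maximum `u` is
differentiable and touches a maximising state from above, which forces `u' = 0`; being Lipschitz,
hence absolutely continuous, `u` stays at its initial value `m`. While some agent lies below `m`,
connectedness gives an agent of minimal value with a neighbour strictly above it, which moves at
unit speed; so `∑ᵢ xᵢ` grows at rate at least one while staying below `M m`, and every agent has
reached `m` by time `∑ᵢ (m - xᵢ(0)) + 1`.
-/

open MeasureTheory Set

namespace SimpleGraph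

variable {V : Type*} [Fintype V] (G : SimpleGraph V) [DecidableRel G.Adj]

noncomputable def maxConsensusField (y : V → ℝ) (i : V) : ℝ :=
  if 0 < ∑ j ∈ G.neighborFinset i, (y j - y i) then 1 else 0

variable {G}

theorem maxConsensusField_nonneg (y : V → ℝ) (i : V) : 0 ≤ G.maxConsensusField y i := by
  unfold maxConsensusField; split_ifs <;> norm_num

theorem maxConsensusField_le_one (y : V → ℝ) (i : V) : G.maxConsensusField y i ≤ 1 := by
  unfold maxConsensusField; split_ifs <;> norm_num

theorem norm_maxConsensusField_le_one (y : V → ℝ) (i : V) : ‖G.maxConsensusField y i‖ ≤ 1 := by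
  rw [Real.norm_eq_abs, abs_le]
  exact ⟨by linarith [maxConsensusField_nonneg (G := G) y i], maxConsensusField_le_one y i⟩

theorem maxConsensusField_eq_zero_of_isMax {y : V → ℝ} {i : V} (hi : ∀ j, y j ≤ y i) :
    G.maxConsensusField y i = 0 :=
  if_neg (Finset.sum_nonpos fun j _ => sub_nonpos.2 (hi j)).not_gt

theorem Connected.exists_sum_sub_pos (hG : G.Connected) {y : V → ℝ} {a b : V} (hab : y a < y b) :
    ∃ i, 0 < ∑ j ∈ G.neighborFinset i, (y j - y i) := by
  obtain ⟨c, -, hc⟩ := Finset.exists_min_image Finset.univ y ⟨a, Finset.mem_univ a⟩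
  obtain ⟨w⟩ := hG.preconnected c b
  -- along a walk from a minimiser `c` to `b`, some minimiser is adjacent to a non-minimiser
  obtain ⟨d, -, hd, hd'⟩ := w.exists_boundary_dart {k | y k ≤ y c} (le_refl (y c))
    (not_le.2 ((hc a (Finset.mem_univ a)).trans_lt hab))
  exact ⟨d.fst, Finset.sum_pos' (fun j _ => sub_nonneg.2 (hd.trans (hc j (Finset.mem_univ j))))
    ⟨d.snd, (G.mem_neighborFinset _ _).2 d.adj, sub_pos.2 (hd.trans_lt (not_le.1 hd'))⟩⟩

theorem Connected.one_le_sum_maxConsensusField (hG : G.Connected) {y : V → ℝ} {a b : V}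
    (hab : y a < y b) : 1 ≤ ∑ i, G.maxConsensusField y i := by
  obtain ⟨i, hi⟩ := hG.exists_sum_sub_pos hab
  calc (1 : ℝ) = G.maxConsensusField y i := (if_pos hi).symm
    _ ≤ ∑ i, G.maxConsensusField y i :=
      Finset.single_le_sum (fun j _ => maxConsensusField_nonneg y j) (Finset.mem_univ i)

end SimpleGraph

theorem DifferentiableAt.hasDerivAt_of_le_of_eq {u v : ℝ → ℝ} {v' σ : ℝ}
    (hu : DifferentiableAt ℝ u σ) (hv : HasDerivAt v v' σ) (hle : v ≤ u) (heq : v σ = u σ) :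
    HasDerivAt u v' σ := by
  have hmin : IsLocalMin (u - v) σ :=
    IsMinOn.isLocalMin (fun t _ => by simpa [heq] using hle t) Filter.univ_mem
  have hu' := hu.hasDerivAt
  rwa [sub_eq_zero.1 (hmin.hasDerivAt_eq_zero (hu'.sub hv))] at hu'

section FinsetSup

variable {ι : Type*} [Fintype ι] [Nonempty ι]

theorem LipschitzOnWith.finset_univ_sup' {α : Type*} [PseudoMetricSpace α] {f : ι → α → ℝ}
    {K : NNReal} {s : Set α} (hf : ∀ i, LipschitzOnWith K (f i) s) :
    LipschitzOnWith K (fun t => Finset.univ.sup' Finset.univ_nonempty (f · t)) s :=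
  LipschitzOnWith.of_le_add_mul K fun t ht t' ht' =>
    Finset.sup'_le _ _ fun i _ =>
      calc f i t ≤ f i t' + K * dist t t' := by
            linarith [le_abs_self (f i t - f i t'), (hf i).dist_le_mul t ht t' ht',
              Real.dist_eq (f i t) (f i t')]
        _ ≤ _ := by gcongr; exact Finset.le_sup' (f · t') (Finset.mem_univ i)

theorem finset_univ_sup'_eq_of_ae_hasDerivAt_zero {f : ι → ℝ → ℝ} {K : NNReal} {a b : ℝ}
    (hf : ∀ i, LipschitzOnWith K (f i) (uIcc a b))
    (hmax : ∀ᵐ σ, σ ∈ uIcc a b → ∀ i, (∀ j, f j σ ≤ f i σ) → HasDerivAt (f i) 0 σ) :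
    Finset.univ.sup' Finset.univ_nonempty (f · b) =
      Finset.univ.sup' Finset.univ_nonempty (f · a) := by
  set u := fun t => Finset.univ.sup' Finset.univ_nonempty (f · t)
  have hu := (LipschitzOnWith.finset_univ_sup' hf).absolutelyContinuousOnInterval
  obtain ⟨C, hC⟩ := hu.const_of_ae_hasDerivAt_zero (by
    filter_upwards [hu.ae_differentiableAt, hmax] with σ hdiff hmax hσ
    obtain ⟨k, -, hk⟩ := Finset.exists_mem_eq_sup' Finset.univ_nonempty (f · σ)
    have hle : ∀ i, f i ≤ u := fun i t => Finset.le_sup' (f · t) (Finset.mem_univ i)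
    exact (hdiff hσ).hasDerivAt_of_le_of_eq (hmax hσ k fun j => hk ▸ hle j σ) (hle k) hk.symm)
  exact (hC b right_mem_uIcc).trans (hC a left_mem_uIcc).symm

end FinsetSup

variable {V : Type*} [Fintype V] {G : SimpleGraph V} [DecidableRel G.Adj]

structure IsMaxConsensusSolution (G : SimpleGraph V) [DecidableRel G.Adj] (x : ℝ → V → ℝ) :
    Prop where
  continuous : ∀ i, Continuous fun t => x t i
  eq_integral : ∀ i t, 0 ≤ t → x t i = x 0 i + ∫ s in (0 : ℝ)..t, G.maxConsensusField (x s) i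

namespace IsMaxConsensusSolution

variable {x : ℝ → V → ℝ} (hx : IsMaxConsensusSolution G x)
include hx

theorem locallyIntegrable_field (i : V) :
    LocallyIntegrable (fun s => G.maxConsensusField (x s) i) volume := by
  have hsum : Continuous fun s => ∑ j ∈ G.neighborFinset i, (x s j - x s i) :=
    continuous_finsetSum _ fun j _ => (hx.continuous j).sub (hx.continuous i)
  refine (locallyIntegrable_const (1 : ℝ)).mono ?_ (ae_of_all _ fun s => ?_)
  · exact (Measurable.ite (measurableSet_lt measurable_const hsum.measurable)
      measurable_const measurable_const).aestronglyMeasurable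
  · simpa only [norm_one] using G.norm_maxConsensusField_le_one (x s) i

theorem intervalIntegrable_field (i : V) (a b : ℝ) :
    IntervalIntegrable (fun s => G.maxConsensusField (x s) i) volume a b :=
  ((hx.locallyIntegrable_field i).integrableOn_isCompact isCompact_uIcc).intervalIntegrable

theorem sub_eq_integral (i : V) {s t : ℝ} (hs : 0 ≤ s) (ht : 0 ≤ t) :
    x t i - x s i = ∫ σ in s..t, G.maxConsensusField (x σ) i := by
  rw [hx.eq_integral i t ht, hx.eq_integral i s hs, add_sub_add_left_eq_sub,
    intervalIntegral.integral_interval_sub_left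
    (hx.intervalIntegrable_field i 0 t) (hx.intervalIntegrable_field i 0 s)]

theorem monotoneOn (i : V) : MonotoneOn (fun t => x t i) (Ici 0) := fun s hs t _ hst => by
  have := hx.sub_eq_integral i hs (le_trans hs hst)
  have : 0 ≤ ∫ σ in s..t, G.maxConsensusField (x σ) i :=
    intervalIntegral.integral_nonneg hst fun σ _ => G.maxConsensusField_nonneg (x σ) i
  dsimp only
  linarith

theorem lipschitzOnWith (i : V) : LipschitzOnWith 1 (fun t => x t i) (Ici 0) :=
  LipschitzOnWith.of_dist_le_mul fun t ht s hs => by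
    rw [Real.dist_eq, hx.sub_eq_integral i hs ht, NNReal.coe_one, one_mul, Real.dist_eq]
    have h := intervalIntegral.norm_integral_le_of_norm_le_const (a := s) (b := t) (C := 1)
      fun σ _ => G.norm_maxConsensusField_le_one (x σ) i
    rwa [Real.norm_eq_abs, one_mul] at h

theorem ae_hasDerivAt : ∀ᵐ σ, 0 < σ → ∀ i,
    HasDerivAt (fun t => x t i) (G.maxConsensusField (x σ) i) σ := by
  filter_upwards [ae_all_iff.2 fun i =>
    _root_.LocallyIntegrable.ae_hasDerivAt_integral (hx.locallyIntegrable_field i)]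
    with σ hσ hpos i
  refine ((hσ i 0).const_add (x 0 i)).congr_of_eventuallyEq ?_
  filter_upwards [Ioi_mem_nhds hpos] with t ht
  exact hx.eq_integral i t (le_of_lt ht)

theorem sum_sub_eq_integral {t : ℝ} (ht : 0 ≤ t) :
    ∑ k, (x t k - x 0 k) = ∫ σ in (0 : ℝ)..t, ∑ k, G.maxConsensusField (x σ) k := by
  rw [intervalIntegral.integral_finsetSum fun k _ => hx.intervalIntegrable_field k 0 t]
  exact Finset.sum_congr rfl fun k _ => hx.sub_eq_integral k le_rfl ht

theorem le_sum_sub_of_one_le_sum_field {t : ℝ} (ht : 0 ≤ t)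
    (hmoving : ∀ σ ∈ Icc 0 t, 1 ≤ ∑ k, G.maxConsensusField (x σ) k) :
    t ≤ ∑ k, (x t k - x 0 k) :=
  calc t = ∫ _ in (0 : ℝ)..t, (1 : ℝ) := by simp
    _ ≤ _ := intervalIntegral.integral_mono_on ht intervalIntegrable_const
        (by simpa only [Finset.sum_fn] using
          IntervalIntegrable.sum Finset.univ fun k _ => hx.intervalIntegrable_field k 0 t)
        hmoving
    _ = _ := (hx.sum_sub_eq_integral ht).symm

variable [Nonempty V]

theorem sup'_eq {t : ℝ} (ht : 0 ≤ t) :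
    Finset.univ.sup' Finset.univ_nonempty (x t) = Finset.univ.sup' Finset.univ_nonempty (x 0) := by
  have hsub : uIcc 0 t ⊆ Ici 0 := by rw [uIcc_of_le ht]; exact Icc_subset_Ici_self
  refine finset_univ_sup'_eq_of_ae_hasDerivAt_zero (f := fun i s => x s i)
    (fun i => (hx.lipschitzOnWith i).mono hsub) ?_
  filter_upwards [hx.ae_hasDerivAt, measure_eq_zero_iff_ae_notMem.1 (measure_singleton (0 : ℝ))]
    with σ hσ hσ0 hmem i hi
  have hpos : 0 < σ := lt_of_le_of_ne (hsub hmem) (Ne.symm hσ0)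
  simpa only [SimpleGraph.maxConsensusField_eq_zero_of_isMax hi] using hσ hpos i

theorem le_sup' {t : ℝ} (ht : 0 ≤ t) (i : V) :
    x t i ≤ Finset.univ.sup' Finset.univ_nonempty (x 0) :=
  (Finset.le_sup' (x t) (Finset.mem_univ i)).trans (hx.sup'_eq ht).le

theorem one_le_sum_field_of_lt_sup' (hG : G.Connected) {σ : ℝ} (hσ : 0 ≤ σ) {i : V}
    (hi : x σ i < Finset.univ.sup' Finset.univ_nonempty (x 0)) :
    1 ≤ ∑ k, G.maxConsensusField (x σ) k := by
  obtain ⟨k, -, hk⟩ := Finset.exists_mem_eq_sup' Finset.univ_nonempty (x σ)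
  exact hG.one_le_sum_maxConsensusField (hi.trans_eq (by rw [← hx.sup'_eq hσ, hk]))

theorem exists_forall_ge_eq_sup' (hG : G.Connected) :
    ∃ T ≥ (0 : ℝ), ∀ t ≥ T, ∀ i, x t i = Finset.univ.sup' Finset.univ_nonempty (x 0) := by
  set m := Finset.univ.sup' Finset.univ_nonempty (x 0)
  set T := ∑ k, (m - x 0 k) + 1
  have hT : 0 ≤ T :=
    add_nonneg (Finset.sum_nonneg fun k _ => sub_nonneg.2 (hx.le_sup' le_rfl k)) zero_le_one
  suffices hreach : ∀ i, x T i = m from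
    ⟨T, hT, fun t ht i => le_antisymm (hx.le_sup' (hT.trans ht) i)
      (hreach i ▸ hx.monotoneOn i hT (hT.trans ht) ht)⟩
  by_contra! ⟨i, hi⟩
  have hlt : x T i < m := lt_of_le_of_ne (hx.le_sup' hT i) hi
  have hgrowth := hx.le_sum_sub_of_one_le_sum_field hT fun σ hσ =>
    hx.one_le_sum_field_of_lt_sup' hG hσ.1 ((hx.monotoneOn i hσ.1 hT hσ.2).trans_lt hlt)
  have hbound : ∑ k, (x T k - x 0 k) ≤ ∑ k, (m - x 0 k) :=
    Finset.sum_le_sum fun k _ => by linarith [hx.le_sup' hT k]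
  linarith

end IsMaxConsensusSolution

/-- Proposition 3 (max-consensus in finite time): under the discontinuous
consensus dynamics with sgn₊ (in integral/Carathéodory form), all states reach
the maximum of the initial conditions in finite time. -/
theorem max_consensus_finite_time
    (M : ℕ) (hM : 1 ≤ M)
    (G : SimpleGraph (Fin M)) [DecidableRel G.Adj] (hG : G.Connected)
    (sgnPos : ℝ → ℝ)
    (hsgn : ∀ y : ℝ, sgnPos y = if 0 < y then 1 else 0)
    (x : ℝ → Fin M → ℝ)
    (hcont : ∀ i : Fin M, Continuous (fun t => x t i))
    (hdyn : ∀ (i : Fin M) (t : ℝ), 0 ≤ t →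
      x t i = x 0 i + ∫ s in (0 : ℝ)..t,
        sgnPos (∑ j ∈ G.neighborFinset i, (x s j - x s i))) :
    ∃ T ≥ (0 : ℝ), ∀ t ≥ T, ∀ i : Fin M,
      x t i = Finset.univ.sup' ⟨⟨0, by omega⟩, Finset.mem_univ _⟩ (x 0) := by
  have : Nonempty (Fin M) := ⟨⟨0, hM⟩⟩
  have hx : IsMaxConsensusSolution G x := ⟨hcont, fun i t ht => by
    rw [hdyn i t ht]
    simp only [hsgn, SimpleGraph.maxConsensusField]⟩
  exact hx.exists_forall_ge_eq_sup' hG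
end
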